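/- Let T > 0 and n ≥ 1. Let α₀, α₁, …, αₙ : [0,T] → ℝ be continuously differentiable nondecreasing functions with α₀(t) = 0, αₙ(t) = t, α_j(0) = 0 for all j, and α_{j−1}(t) ≤ α_j(t) ≤ t for all j and t ∈ [0,T]. For each i, j ∈ {1,…,n}, let K_{ij} be continuous on the triangle {(t,s) : 0 ≤ s ≤ t ≤ T} with continuous partial derivative ∂K_{ij}(t,s)/∂t, and let f_i : [0,T] → ℝ be differentiable at 0. Suppose continuous functions x₁, …, xₙ : [0,T] → ℝ satisfy, for every t ∈ [0,T] and every i, the system Σ_{j=1}^{n} ∫_{α_{j−1}(t)}^{α_j(t)} K_{ij}(t,s) x_j(s) ds = f_i(t). Then the initial values x_j(0) satisfy the linear algebraic system Σ_{j=1}^{n} K_{ij}(0,0)·(α_j′(0) − α_{j−1}′(0))·x_j(0) = f_i′(0) for every i = 1,…,n. -/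

import Mathlib

/-!
Differentiate the `i`-th equation at `t = 0`. A term `∫_{a(t)}^{b(t)} φ(t,s) ds` with
`0 ≤ a(t), b(t) ≤ t` differs from `(b(t) − a(t)) φ(0,0)` by at most
`|b(t) − a(t)| · sup_{0 ≤ s ≤ t} |φ(t,s) − φ(0,0)| = o(t)`, so its one-sided derivative at `0`
is `(b′(0) − a′(0)) φ(0,0)`, by continuity of `φ` at the corner of the triangle alone.
-/

open Set Function Filter Asymptotics intervalIntegral Topology

section IntegralWithVariableLimits

variable {φ : ℝ → ℝ → ℝ} {a b : ℝ → ℝ} {I : Set ℝ} {S : Set (ℝ × ℝ)}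

theorem isLittleO_integral_sub_apply_zero_zero (hφ : ContinuousWithinAt (uncurry φ) S (0, 0))
    (hIS : ∀ t ∈ I, ∀ s ∈ Icc 0 t, (t, s) ∈ S)
    (ha : ∀ t ∈ I, a t ∈ Icc 0 t) (hb : ∀ t ∈ I, b t ∈ Icc 0 t) :
    (fun t => ∫ s in a t..b t, (φ t s - φ 0 0)) =o[𝓝[I] 0] fun t => t := by
  refine IsLittleO.of_bound fun ε hε => ?_
  obtain ⟨δ, hδ, hφδ⟩ := Metric.continuousWithinAt_iff.mp hφ ε hε
  filter_upwards [self_mem_nhdsWithin, nhdsWithin_le_nhds (Metric.ball_mem_nhds 0 hδ)]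
    with t ht htδ
  have hab : uIcc (a t) (b t) ⊆ Icc 0 t := uIcc_subset_Icc (ha t ht) (hb t ht)
  have ht0 : 0 ≤ t := (ha t ht).1.trans (ha t ht).2
  calc ‖∫ s in a t..b t, (φ t s - φ 0 0)‖ ≤ ε * |b t - a t| := by
        refine norm_integral_le_of_norm_le_const fun s hs => ?_
        have hs' := hab (uIoc_subset_uIcc hs)
        refine (hφδ (hIS t ht s hs') ?_).le
        rw [Metric.mem_ball, Real.dist_0_eq_abs] at htδ
        rw [Prod.dist_eq, Real.dist_0_eq_abs, Real.dist_0_eq_abs]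
        exact max_lt htδ ((abs_le_abs_of_nonneg hs'.1 hs'.2).trans_lt htδ)
    _ ≤ ε * ‖t‖ := by
        rw [Real.norm_eq_abs, abs_of_nonneg ht0]
        gcongr
        exact abs_sub_le_of_nonneg_of_le (hb t ht).1 (hb t ht).2 (ha t ht).1 (ha t ht).2

theorem hasDerivWithinAt_integral_of_mem_Icc (hφ : ContinuousOn (uncurry φ) S) (hI0 : 0 ∈ I)
    (hIS : ∀ t ∈ I, ∀ s ∈ Icc 0 t, (t, s) ∈ S)
    (ha : ∀ t ∈ I, a t ∈ Icc 0 t) (hb : ∀ t ∈ I, b t ∈ Icc 0 t)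
    {a' b' : ℝ} (ha' : HasDerivWithinAt a a' I 0) (hb' : HasDerivWithinAt b b' I 0) :
    HasDerivWithinAt (fun t => ∫ s in a t..b t, φ t s) ((b' - a') * φ 0 0) I 0 := by
  have hremainder : HasDerivWithinAt (fun t => ∫ s in a t..b t, (φ t s - φ 0 0)) 0 I 0 := by
    have ha0 : a 0 = 0 := le_antisymm (ha 0 hI0).2 (ha 0 hI0).1
    have hb0 : b 0 = 0 := le_antisymm (hb 0 hI0).2 (hb 0 hI0).1
    rw [hasDerivWithinAt_iff_isLittleO]
    simpa [ha0, hb0] using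
      isLittleO_integral_sub_apply_zero_zero (hφ _ (hIS 0 hI0 0 ⟨le_rfl, le_rfl⟩)) hIS ha hb
  have hsplit : ∀ t ∈ I, ∫ s in a t..b t, φ t s
      = (b t - a t) * φ 0 0 + ∫ s in a t..b t, (φ t s - φ 0 0) := by
    intro t ht
    have hint : IntervalIntegrable (φ t) MeasureTheory.volume (a t) (b t) :=
      ContinuousOn.intervalIntegrable <| hφ.comp (Continuous.prodMk_right t).continuousOn
        fun s hs => hIS t ht s (uIcc_subset_Icc (ha t ht) (hb t ht) hs)
    rw [integral_sub hint intervalIntegrable_const, integral_const, smul_eq_mul]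
    ring
  exact ((((hb'.sub ha').mul_const (φ 0 0)).add hremainder).congr_of_mem hsplit hI0).congr_deriv
    (add_zero _)

end IntegralWithVariableLimits

theorem volterra_system_initial_values_general
    (T : ℝ) (hT : 0 < T) (n : ℕ)
    (α α' : ℕ → ℝ → ℝ)
    (hαinit : ∀ j ≤ n, α j 0 = 0)
    -- each `α_j` is continuously differentiable on `[0,T]` with derivative `α'_j`
    (hαd : ∀ j ≤ n, ∀ t ∈ Set.Icc (0 : ℝ) T,
      HasDerivWithinAt (α j) (α' j t) (Set.Icc 0 T) t)
    -- each `α_j` is nondecreasing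
    (hαmono : ∀ j ≤ n, MonotoneOn (α j) (Set.Icc 0 T))
    -- `α_{j−1}(t) ≤ α_j(t) ≤ t`
    (hαord : ∀ j ∈ Finset.Icc 1 n, ∀ t ∈ Set.Icc (0 : ℝ) T,
      α (j - 1) t ≤ α j t ∧ α j t ≤ t)
    (K : ℕ → ℕ → ℝ → ℝ → ℝ)
    -- `K_{ij}` continuous on the triangle `{(t,s) : 0 ≤ s ≤ t ≤ T}`
    (hKc : ∀ i ∈ Finset.Icc 1 n, ∀ j ∈ Finset.Icc 1 n,
      ContinuousOn (fun p : ℝ × ℝ => K i j p.1 p.2)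
        {p : ℝ × ℝ | 0 ≤ p.2 ∧ p.2 ≤ p.1 ∧ p.1 ≤ T})
    (f : ℕ → ℝ → ℝ) (f' : ℕ → ℝ)
    -- each `f_i` is (one-sidedly) differentiable at `0` with derivative `f'_i`
    (hf : ∀ i ∈ Finset.Icc 1 n, HasDerivWithinAt (f i) (f' i) (Set.Icc 0 T) 0)
    (x : ℕ → ℝ → ℝ)
    (hx : ∀ j ∈ Finset.Icc 1 n, ContinuousOn (x j) (Set.Icc 0 T))
    -- the system of integral equations
    (hsys : ∀ i ∈ Finset.Icc 1 n, ∀ t ∈ Set.Icc (0 : ℝ) T,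
      ∑ j ∈ Finset.Icc 1 n, ∫ s in (α (j - 1) t)..(α j t), K i j t s * x j s = f i t) :
    ∀ i ∈ Finset.Icc 1 n,
      ∑ j ∈ Finset.Icc 1 n, K i j 0 0 * (α' j 0 - α' (j - 1) 0) * x j 0 = f' i := by
  intro i hi
  have h0 : (0 : ℝ) ∈ Icc 0 T := ⟨le_rfl, hT.le⟩
  have hterm : ∀ j ∈ Finset.Icc 1 n,
      HasDerivWithinAt (fun t => ∫ s in α (j - 1) t..α j t, K i j t s * x j s)
        ((α' j 0 - α' (j - 1) 0) * (K i j 0 0 * x j 0)) (Icc 0 T) 0 := by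
    intro j hj
    have hjn : j ≤ n := (Finset.mem_Icc.mp hj).2
    have hj1n : j - 1 ≤ n := (Nat.sub_le j 1).trans hjn
    refine hasDerivWithinAt_integral_of_mem_Icc (φ := fun t s => K i j t s * x j s)
      ((hKc i hi j hj).fun_mul ((hx j hj).comp continuous_snd.continuousOn
        fun p hp => ⟨hp.1, hp.2.1.trans hp.2.2⟩)) h0
      (fun t ht s hs => ⟨hs.1, hs.2, ht.2⟩) (fun t ht => ⟨?_, ?_⟩)
      (fun t ht => ⟨?_, (hαord j hj t ht).2⟩) (hαd (j - 1) hj1n 0 h0) (hαd j hjn 0 h0)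
    · exact hαinit (j - 1) hj1n ▸ hαmono (j - 1) hj1n h0 ht ht.1
    · exact (hαord j hj t ht).1.trans (hαord j hj t ht).2
    · exact hαinit j hjn ▸ hαmono j hjn h0 ht ht.1
  have hfi : HasDerivWithinAt (f i)
      (∑ j ∈ Finset.Icc 1 n, (α' j 0 - α' (j - 1) 0) * (K i j 0 0 * x j 0)) (Icc 0 T) 0 :=
    (HasDerivWithinAt.fun_sum hterm).congr_of_mem (fun t ht => (hsys i hi t ht).symm) h0
  rw [(uniqueDiffOn_Icc hT 0 h0).eq_deriv _ (hf i hi) hfi]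
  exact Finset.sum_congr rfl fun j _ => by ring

/-- The initial values `x_j(0)` of a continuous solution of the system of linear
Volterra equations of the first kind
`Σ_j ∫_{α_{j−1}(t)}^{α_j(t)} K_{ij}(t,s) x_j(s) ds = f_i(t)` with kernels
jump-discontinuous along the curves `α_j` (with `α_j(0) = 0`) satisfy the linear
algebraic system `Σ_j K_{ij}(0,0) (α_j′(0) − α_{j−1}′(0)) x_j(0) = f_i′(0)`. -/
theorem volterra_system_initial_values
    (T : ℝ) (hT : 0 < T) (n : ℕ) (hn : 1 ≤ n)
    (α α' : ℕ → ℝ → ℝ)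
    (hα0 : ∀ t, α 0 t = 0)
    (hαn : ∀ t, α n t = t)
    (hαinit : ∀ j ≤ n, α j 0 = 0)
    -- each `α_j` is continuously differentiable on `[0,T]` with derivative `α'_j`
    (hαd : ∀ j ≤ n, ∀ t ∈ Set.Icc (0 : ℝ) T,
      HasDerivWithinAt (α j) (α' j t) (Set.Icc 0 T) t)
    (hα'c : ∀ j ≤ n, ContinuousOn (α' j) (Set.Icc 0 T))
    -- each `α_j` is nondecreasing
    (hαmono : ∀ j ≤ n, MonotoneOn (α j) (Set.Icc 0 T))
    -- `α_{j−1}(t) ≤ α_j(t) ≤ t`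
    (hαord : ∀ j ∈ Finset.Icc 1 n, ∀ t ∈ Set.Icc (0 : ℝ) T,
      α (j - 1) t ≤ α j t ∧ α j t ≤ t)
    (K Kt : ℕ → ℕ → ℝ → ℝ → ℝ)
    -- `K_{ij}` continuous on the triangle `{(t,s) : 0 ≤ s ≤ t ≤ T}`
    (hKc : ∀ i ∈ Finset.Icc 1 n, ∀ j ∈ Finset.Icc 1 n,
      ContinuousOn (fun p : ℝ × ℝ => K i j p.1 p.2)
        {p : ℝ × ℝ | 0 ≤ p.2 ∧ p.2 ≤ p.1 ∧ p.1 ≤ T})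
    -- with partial derivative `∂K_{ij}(t,s)/∂t = Kt_{ij}(t,s)` on the triangle,
    (hKt : ∀ i ∈ Finset.Icc 1 n, ∀ j ∈ Finset.Icc 1 n, ∀ t ∈ Set.Icc (0 : ℝ) T,
      ∀ s, 0 ≤ s → s ≤ t →
        HasDerivWithinAt (fun u => K i j u s) (Kt i j t s) (Set.Icc 0 T) t)
    -- continuous on the triangle
    (hKtc : ∀ i ∈ Finset.Icc 1 n, ∀ j ∈ Finset.Icc 1 n,
      ContinuousOn (fun p : ℝ × ℝ => Kt i j p.1 p.2)
        {p : ℝ × ℝ | 0 ≤ p.2 ∧ p.2 ≤ p.1 ∧ p.1 ≤ T})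
    (f : ℕ → ℝ → ℝ) (f' : ℕ → ℝ)
    -- each `f_i` is (one-sidedly) differentiable at `0` with derivative `f'_i`
    (hf : ∀ i ∈ Finset.Icc 1 n, HasDerivWithinAt (f i) (f' i) (Set.Icc 0 T) 0)
    (x : ℕ → ℝ → ℝ)
    (hx : ∀ j ∈ Finset.Icc 1 n, ContinuousOn (x j) (Set.Icc 0 T))
    -- the system of integral equations
    (hsys : ∀ i ∈ Finset.Icc 1 n, ∀ t ∈ Set.Icc (0 : ℝ) T,
      ∑ j ∈ Finset.Icc 1 n, ∫ s in (α (j - 1) t)..(α j t), K i j t s * x j s = f i t) :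
    ∀ i ∈ Finset.Icc 1 n,
      ∑ j ∈ Finset.Icc 1 n, K i j 0 0 * (α' j 0 - α' (j - 1) 0) * x j 0 = f' i :=
  volterra_system_initial_values_general T hT n α α' hαinit hαd hαmono hαord K hKc f f' hf x hx hsys
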